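/- arXiv:1910.02295 — 4 statements merged into one kernel-verified Lean document; each statement's English description precedes it below -/
import Mathlib

section
/- Let f : ℝ → ℝ be monotone increasing and odd, and assume f is convex on [0,∞). Then for every δ ≥ 0 and every t ∈ ℝ, f(t - 2δ) - f(t) ≤ -2 f(δ). -/
lemma convexOn_superadd (f : ℝ → ℝ)
    (hconv : ConvexOn ℝ (Set.Ici (0 : ℝ)) f) (h0 : f 0 = 0) :
    ∀ b h : ℝ, 0 ≤ b → 0 ≤ h → f b + f h ≤ f (b + h) := by
  intro b h hb hh
  rcases hb.eq_or_lt with rfl | hb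
  · simp [h0]
  rcases hh.eq_or_lt with rfl | hh
  · simp [h0]
  have hbh : 0 < b + h := by linarith
  have h1 : f h ≤ (h / (b + h)) * f (b + h) := by
    have := hconv.2 (Set.mem_Ici.2 le_rfl) (Set.mem_Ici.2 hbh.le)
      (div_nonneg hb.le hbh.le) (div_nonneg hh.le hbh.le)
      (by field_simp; try ring)
    rw [show (b/(b+h)) • (0:ℝ) + (h/(b+h)) • (b+h) = h by
      simp only [smul_eq_mul, mul_zero, zero_add]; exact div_mul_cancel₀ _ hbh.ne'] at this
    simpa [h0, smul_eq_mul] using this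
  have h2 : f b ≤ (b / (b + h)) * f (b + h) := by
    have := hconv.2 (Set.mem_Ici.2 le_rfl) (Set.mem_Ici.2 hbh.le)
      (div_nonneg hh.le hbh.le) (div_nonneg hb.le hbh.le)
      (by field_simp; try ring)
    rw [show (h/(b+h)) • (0:ℝ) + (b/(b+h)) • (b+h) = b by
      simp only [smul_eq_mul, mul_zero, zero_add]; exact div_mul_cancel₀ _ hbh.ne'] at this
    simpa [h0, smul_eq_mul] using this
  have : (h / (b + h)) * f (b + h) + (b / (b + h)) * f (b + h) = f (b + h) := by
    field_simp
    ring
  linarith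

/-- **Key comparison lemma for odd increasing convex functions.**
If `f : ℝ → ℝ` is monotone increasing, odd, and convex on `[0, ∞)`, then for every
`δ ≥ 0` and every `t ∈ ℝ` one has `f (t - 2δ) - f t ≤ -2 f δ`. -/
theorem odd_convexOn_two_point_estimate (f : ℝ → ℝ)
    (hmono : Monotone f)
    (hodd : ∀ t : ℝ, f (-t) = -f t)
    (hconv : ConvexOn ℝ (Set.Ici (0 : ℝ)) f) :
    ∀ δ t : ℝ, 0 ≤ δ → f (t - 2 * δ) - f t ≤ -2 * f δ := by
  intro δ t hδ
  have h0 : f 0 = 0 := by have := hodd 0; simp at this; linarith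
  have hsup := convexOn_superadd f hconv h0
  have h2δ : 2 * f δ ≤ f (2 * δ) := by
    have := hsup δ δ hδ hδ
    rw [show δ + δ = 2 * δ by ring] at this
    linarith
  rcases le_or_gt t 0 with ht | ht
  · -- t ≤ 0 : use oddness
    have h1 : f (2 * δ) + f (-t) ≤ f (-t + 2 * δ) := by
      have := hsup (-t) (2 * δ) (by linarith) (by linarith)
      linarith
    have e1 : f (t - 2 * δ) = - f (-t + 2 * δ) := by
      have := hodd (-t + 2 * δ); rw [show -(-t + 2*δ) = t - 2*δ by ring] at this
      linarith
    have e2 : f t = - f (-t) := by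
      have := hodd (-t); rw [neg_neg] at this; linarith
    rw [e1, e2]; linarith
  rcases le_or_gt t (2 * δ) with ht2 | ht2
  · -- 0 ≤ t ≤ 2δ : midpoint convexity
    have hx : t ∈ Set.Ici (0 : ℝ) := ht.le
    have hy : 2 * δ - t ∈ Set.Ici (0 : ℝ) := by simp; linarith
    have := hconv.2 hx hy (by norm_num : (0:ℝ) ≤ 1/2) (by norm_num : (0:ℝ) ≤ 1/2)
      (by norm_num)
    have hmid : f δ ≤ (1/2) * f t + (1/2) * f (2 * δ - t) := by
      have e : (1/2 : ℝ) • t + (1/2 : ℝ) • (2 * δ - t) = δ := by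
        simp only [smul_eq_mul]; ring
      rw [e] at this; simpa [smul_eq_mul] using this
    have e1 : f (t - 2 * δ) = - f (2 * δ - t) := by
      have := hodd (2 * δ - t); rw [show -(2*δ - t) = t - 2*δ by ring] at this
      linarith
    rw [e1]; linarith
  · -- t ≥ 2δ
    have h1 : f (t - 2 * δ) + f (2 * δ) ≤ f t := by
      have := hsup (t - 2 * δ) (2 * δ) (by linarith) (by linarith)
      rw [show t - 2*δ + 2*δ = t by ring] at this
      linarith
    linarith
end

section
/- Fix 1 < p ≤ 2 and define h : ℝ → ℝ by h(x) = sign(x)·|x|^{1/(p-1)} (so h(0) = 0). If X, Y, L are real numbers with L ≤ 0 and X ≤ Y + 2L, then h(X) ≤ h(Y) + 2 h(L). -/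
/-!
For `q = 1 / (p - 1) ≥ 1` the function `h = sgnPow q` is odd and increasing, and `h'(t) = q |t| ^ (q - 1)`
is even and increasing in `|t|`. Hence among intervals of length `2|L|`, the one centred at `0`
carries the least increment of `h`, namely `-2 h(L)`; so `h (Y + 2L) ≤ h Y + 2 h L`, and
monotonicity gives the claim for `X ≤ Y + 2L`. The three positions of the interval
relative to `0` are handled by superadditivity of `t ^ q` (interval on one side of `0`, the other
side by oddness) and by midpoint convexity (interval straddling `0`).
-/

/-- The odd power function `h x = sign x * |x| ^ q` (with `h 0 = 0`). -/
noncomputable def sgnPow (q x : ℝ) : ℝ := Real.sign x * |x| ^ q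

open Set

namespace Real

lemma two_mul_rpow_add_div_two_le {q a b : ℝ} (hq : 1 ≤ q) (ha : 0 ≤ a) (hb : 0 ≤ b) :
    2 * ((a + b) / 2) ^ q ≤ a ^ q + b ^ q := by
  have h := (convexOn_rpow hq).2 (mem_Ici.2 ha) (mem_Ici.2 hb)
    (by norm_num : (0 : ℝ) ≤ 1 / 2) (by norm_num : (0 : ℝ) ≤ 1 / 2) (by norm_num)
  simp only [smul_eq_mul] at h
  rw [show (a + b) / 2 = 1 / 2 * a + 1 / 2 * b by ring]
  linarith

lemma two_mul_rpow_le_rpow_two_mul {q a : ℝ} (hq : 1 ≤ q) (ha : 0 ≤ a) :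
    2 * a ^ q ≤ (2 * a) ^ q := by
  simpa [two_mul] using add_rpow_le_rpow_add ha ha hq

end Real

namespace sgnPow

variable {q x : ℝ}

lemma of_nonneg (hq : q ≠ 0) (hx : 0 ≤ x) : sgnPow q x = x ^ q := by
  rcases hx.eq_or_lt with rfl | hx
  · simp [sgnPow, Real.zero_rpow hq]
  · rw [sgnPow, Real.sign_of_pos hx, abs_of_pos hx, one_mul]

lemma neg (q x : ℝ) : sgnPow q (-x) = -sgnPow q x := by
  simp only [sgnPow, Real.sign_neg, abs_neg, neg_mul]

lemma of_nonpos (hq : q ≠ 0) (hx : x ≤ 0) : sgnPow q x = -(-x) ^ q := by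
  rw [← of_nonneg hq (neg_nonneg.2 hx), neg, neg_neg]

lemma monotone (hq : 0 < q) : Monotone (sgnPow q) :=
  monotone_of_odd_of_monotoneOn_nonneg (neg q) fun x hx y hy hxy => by
    rw [of_nonneg hq.ne' hx, of_nonneg hq.ne' hy]
    exact Real.rpow_le_rpow hx hxy hq.le

variable {Y L : ℝ}

lemma add_two_mul_le_of_nonneg (hq : 1 ≤ q) (hL : L ≤ 0) (hY : 0 ≤ Y + 2 * L) :
    sgnPow q (Y + 2 * L) ≤ sgnPow q Y + 2 * sgnPow q L := by
  have hq0 : q ≠ 0 := by positivity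
  rw [of_nonneg hq0 hY, of_nonneg hq0 (by linarith), of_nonpos hq0 hL]
  have hsuper := Real.add_rpow_le_rpow_add hY (by linarith : 0 ≤ 2 * -L) hq
  rw [show Y + 2 * L + 2 * -L = Y by ring] at hsuper
  linarith [Real.two_mul_rpow_le_rpow_two_mul hq (neg_nonneg.2 hL)]

lemma add_two_mul_le_of_nonneg_of_nonpos (hq : 1 ≤ q) (hY : 0 ≤ Y) (hYL : Y + 2 * L ≤ 0) :
    sgnPow q (Y + 2 * L) ≤ sgnPow q Y + 2 * sgnPow q L := by
  have hq0 : q ≠ 0 := by positivity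
  rw [of_nonpos hq0 hYL, of_nonneg hq0 hY, of_nonpos hq0 (by linarith)]
  have hmid := Real.two_mul_rpow_add_div_two_le hq hY (neg_nonneg.2 hYL)
  rw [show (Y + -(Y + 2 * L)) / 2 = -L by ring] at hmid
  linarith

lemma add_two_mul_le (hq : 1 ≤ q) (hL : L ≤ 0) :
    sgnPow q (Y + 2 * L) ≤ sgnPow q Y + 2 * sgnPow q L := by
  rcases le_total 0 (Y + 2 * L) with hYL | hYL
  · exact add_two_mul_le_of_nonneg hq hL hYL
  rcases le_total 0 Y with hY | hY
  · exact add_two_mul_le_of_nonneg_of_nonpos hq hY hYL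
  · -- reflect through `0`: the interval `[Y + 2L, Y]` becomes `[-Y, -(Y + 2L)] ⊆ [0, ∞)`
    have h := add_two_mul_le_of_nonneg (Y := -(Y + 2 * L)) hq hL (by linarith)
    rw [show -(Y + 2 * L) + 2 * L = -Y by ring, neg, neg] at h
    linarith

end sgnPow

/-- **Comparison of the normalized `p`-Laplacian values at two points.**
Fix `1 < p ≤ 2` and let `h x = sign x * |x| ^ (1/(p-1))`. If `L ≤ 0` and
`X ≤ Y + 2L`, then `h X ≤ h Y + 2 h L`. -/
theorem sgnPow_two_point_comparison (p : ℝ) (hp1 : 1 < p) (hp2 : p ≤ 2)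
    (X Y L : ℝ) (hL : L ≤ 0) (hXY : X ≤ Y + 2 * L) :
    sgnPow (1 / (p - 1)) X ≤ sgnPow (1 / (p - 1)) Y + 2 * sgnPow (1 / (p - 1)) L := by
  have hq : 1 ≤ 1 / (p - 1) := by
    rw [le_div_iff₀ (by linarith)]
    linarith
  calc sgnPow (1 / (p - 1)) X ≤ sgnPow (1 / (p - 1)) (Y + 2 * L) :=
        sgnPow.monotone (by linarith) hXY
    _ ≤ _ := sgnPow.add_two_mul_le hq hL
end

section
/- Fix 1 < p < ∞, κ ∈ ℝ, and D > 0. Let μ_p(κ,D) denote the infimum of (∫_{-D/2}^{D/2} |φ′(s)|^p e^{-κ s²/2} ds)/(∫_{-D/2}^{D/2} |φ(s)|^p e^{-κ s²/2} ds) over all Lipschitz functions φ : [-D/2, D/2] → ℝ that are not identically zero and satisfy ∫_{-D/2}^{D/2} |φ(s)|^{p-2} φ(s) e^{-κ s²/2} ds = 0, where φ′ is the almost-everywhere derivative. Let λ_{p,κ,D/2} denote the infimum of (∫_0^{D/2} |φ′(s)|^p e^{-κ s²/2} ds)/(∫_0^{D/2} |φ(s)|^p e^{-κ s²/2} ds)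 over all Lipschitz functions φ : [0, D/2] → ℝ with φ(0) = 0 that are not identically zero. Then μ_p(κ,D) = λ_{p,κ,D/2}. -/
/-- The first nonzero Neumann eigenvalue `μ_p(κ, D)` of the one-dimensional weighted
`p`-Laplacian on `[-D/2, D/2]`, defined variationally as the infimum of the Rayleigh
quotient `(∫ |φ'|^p e^{-κ s²/2}) / (∫ |φ|^p e^{-κ s²/2})` over all Lipschitz functions
`φ` on `[-D/2, D/2]`, not identically zero, satisfying the orthogonality constraint
`∫ |φ|^{p-2} φ e^{-κ s²/2} = 0`.  (Here `deriv φ` is the a.e. derivative of `φ`.) -/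
noncomputable def rayleighNeumann (p κ D : ℝ) : ℝ :=
  sInf { r : ℝ | ∃ φ : ℝ → ℝ,
    (∃ K : NNReal, LipschitzOnWith K φ (Set.Icc (-(D / 2)) (D / 2))) ∧
    ¬ (∀ s ∈ Set.Icc (-(D / 2)) (D / 2), φ s = 0) ∧
    (∫ s in (-(D / 2))..(D / 2), sgnPow (p - 1) (φ s) * Real.exp (-κ * s ^ 2 / 2)) = 0 ∧
    r = (∫ s in (-(D / 2))..(D / 2), |deriv φ s| ^ p * Real.exp (-κ * s ^ 2 / 2)) /
        (∫ s in (-(D / 2))..(D / 2), |φ s| ^ p * Real.exp (-κ * s ^ 2 / 2)) }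

/-- The first Dirichlet(at `0`)/Neumann(at `L`) eigenvalue `λ_{p,κ,L}` on `[0, L]`,
defined variationally as the infimum of the Rayleigh quotient over Lipschitz
functions `φ` on `[0, L]` with `φ 0 = 0`, not identically zero. -/
noncomputable def rayleighDirichletNeumann (p κ L : ℝ) : ℝ :=
  sInf { r : ℝ | ∃ φ : ℝ → ℝ,
    (∃ K : NNReal, LipschitzOnWith K φ (Set.Icc (0 : ℝ) L)) ∧
    φ 0 = 0 ∧
    ¬ (∀ s ∈ Set.Icc (0 : ℝ) L, φ s = 0) ∧
    r = (∫ s in (0 : ℝ)..L, |deriv φ s| ^ p * Real.exp (-κ * s ^ 2 / 2)) /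
        (∫ s in (0 : ℝ)..L, |φ s| ^ p * Real.exp (-κ * s ^ 2 / 2)) }


namespace NeumannAux
open Set MeasureTheory intervalIntegral Filter


lemma sgnPow_zero (q : ℝ) : sgnPow q 0 = 0 := by simp [sgnPow]

lemma sgnPow_of_pos (q : ℝ) {x : ℝ} (hx : 0 < x) : sgnPow q x = x ^ q := by
  simp [sgnPow, Real.sign_of_pos hx, abs_of_pos hx]

lemma sgnPow_of_neg (q : ℝ) {x : ℝ} (hx : x < 0) : sgnPow q x = -((-x) ^ q) := by
  simp [sgnPow, Real.sign_of_neg hx, abs_of_neg hx]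

lemma sgnPow_of_nonneg {q : ℝ} (hq : 0 < q) {x : ℝ} (hx : 0 ≤ x) : sgnPow q x = x ^ q := by
  rcases hx.eq_or_lt with h | h
  · rw [← h, sgnPow_zero, Real.zero_rpow hq.ne']
  · exact sgnPow_of_pos q h

lemma sgnPow_neg (q x : ℝ) : sgnPow q (-x) = - sgnPow q x := by
  simp [sgnPow, Real.sign_neg, abs_neg, neg_mul]

lemma abs_sgnPow_le (q x : ℝ) : |sgnPow q x| ≤ |x| ^ q := by
  rcases lt_trichotomy x 0 with h | h | h
  · rw [sgnPow_of_neg q h, abs_neg, abs_of_nonneg (Real.rpow_nonneg (by linarith) _), abs_of_neg h]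
  · simp [h, sgnPow_zero, Real.rpow_nonneg]
  · rw [sgnPow_of_pos q h, abs_of_nonneg (Real.rpow_nonneg h.le _), abs_of_pos h]

lemma sgnPow_mono {q : ℝ} (hq : 0 < q) : Monotone (sgnPow q) := by
  intro x y hxy
  rcases le_or_gt 0 x with hx | hx
  · rw [sgnPow_of_nonneg hq hx, sgnPow_of_nonneg hq (hx.trans hxy)]
    exact Real.rpow_le_rpow hx hxy hq.le
  · rcases lt_or_ge y 0 with hy | hy
    · rw [sgnPow_of_neg q hx, sgnPow_of_neg q hy, neg_le_neg_iff]
      exact Real.rpow_le_rpow (by linarith) (by linarith) hq.le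
    · calc sgnPow q x ≤ 0 := by
            rw [sgnPow_of_neg q hx]
            simp [Real.rpow_nonneg (by linarith : (0:ℝ) ≤ -x)]
        _ ≤ sgnPow q y := by rw [sgnPow_of_nonneg hq hy]; exact Real.rpow_nonneg hy q

lemma continuous_sgnPow {q : ℝ} (hq : 0 < q) : Continuous (sgnPow q) := by
  rw [continuous_iff_continuousAt]
  intro x
  rcases lt_trichotomy x 0 with hx | hx | hx
  · have h1 : ContinuousAt (fun y : ℝ => -((-y) ^ q)) x := by
      have := (Real.continuousAt_rpow_const (-x) q (Or.inl (by linarith))).comp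
        (continuous_neg.continuousAt (x := x))
      exact this.neg
    refine h1.congr ?_
    filter_upwards [Iio_mem_nhds hx] with y hy
    exact (sgnPow_of_neg q hy).symm
  · subst hx
    have h2 : Tendsto (fun y : ℝ => |y| ^ q) (nhds 0) (nhds 0) := by
      have h3 : ContinuousAt (fun z : ℝ => z ^ q) (|(0:ℝ)|) := by
        simpa using Real.continuousAt_rpow_const (0:ℝ) q (Or.inr hq.le)
      have := h3.comp (continuous_abs.continuousAt (x := (0:ℝ)))
      simpa [ContinuousAt, Function.comp_def, Real.zero_rpow hq.ne'] using this
    have : Tendsto (sgnPow q) (nhds 0) (nhds 0) :=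
      squeeze_zero_norm (fun y => by rw [Real.norm_eq_abs]; exact abs_sgnPow_le q y) h2
    simpa [ContinuousAt, sgnPow_zero] using this
  · have h1 : ContinuousAt (fun y : ℝ => y ^ q) x :=
      Real.continuousAt_rpow_const x q (Or.inl (by linarith))
    refine h1.congr ?_
    filter_upwards [Ioi_mem_nhds hx] with y hy
    exact (sgnPow_of_pos q hy).symm

lemma hasDerivAt_abs_rpow {p : ℝ} (hp : 1 < p) (y : ℝ) :
    HasDerivAt (fun x : ℝ => |x| ^ p) (p * sgnPow (p - 1) y) y := by
  rcases lt_trichotomy y 0 with hy | hy | hy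
  · have h1 : HasDerivAt (fun x : ℝ => (-x) ^ p) (p * (-y) ^ (p - 1) * (-1)) y :=
      (Real.hasDerivAt_rpow_const (x := -y) (p := p) (Or.inl (by linarith))).comp y
        (hasDerivAt_neg y)
    have h2 : (fun x : ℝ => |x| ^ p) =ᶠ[nhds y] (fun x : ℝ => (-x) ^ p) := by
      filter_upwards [Iio_mem_nhds hy] with z hz
      rw [abs_of_neg hz]
    have h3 := h1.congr_of_eventuallyEq h2
    have h4 : p * sgnPow (p - 1) y = p * (-y) ^ (p - 1) * (-1) := by
      rw [sgnPow_of_neg _ hy]; ring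
    rw [h4]; exact h3
  · subst hy
    have hkey : ∀ z : ℝ, z ≠ 0 → ‖slope (fun x : ℝ => |x| ^ p) 0 z‖ = |z| ^ (p - 1) := by
      intro z hz
      have hz' : |z| ≠ 0 := by simpa using hz
      rw [slope_def_field, Real.rpow_sub_one hz']
      simp only [abs_zero, sub_zero, Real.zero_rpow (by positivity : p ≠ 0)]
      rw [Real.norm_eq_abs, abs_div, abs_of_nonneg (Real.rpow_nonneg (abs_nonneg z) p)]
    have h2 : Tendsto (fun z : ℝ => |z| ^ (p - 1)) (nhds 0) (nhds 0) := by
      have h3 : ContinuousAt (fun z : ℝ => z ^ (p - 1)) (|(0 : ℝ)|) := by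
        simpa using Real.continuousAt_rpow_const (0 : ℝ) (p - 1) (Or.inr (by linarith))
      have := h3.comp (continuous_abs.continuousAt (x := (0 : ℝ)))
      simpa [ContinuousAt, Function.comp_def, Real.zero_rpow (sub_ne_zero.mpr hp.ne')] using this
    have hslope : Tendsto (slope (fun x : ℝ => |x| ^ p) 0) (nhdsWithin 0 {(0:ℝ)}ᶜ) (nhds 0) := by
      refine squeeze_zero_norm' ?_ (h2.mono_left nhdsWithin_le_nhds)
      filter_upwards [self_mem_nhdsWithin] with z hz
      exact le_of_eq (hkey z hz)
    have : p * sgnPow (p - 1) 0 = 0 := by rw [sgnPow_zero, mul_zero]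
    rw [this, hasDerivAt_iff_tendsto_slope]
    exact hslope
  · have h1 : HasDerivAt (fun x : ℝ => x ^ p) (p * y ^ (p - 1)) y :=
      Real.hasDerivAt_rpow_const (Or.inl (by linarith))
    have h2 : (fun x : ℝ => |x| ^ p) =ᶠ[nhds y] (fun x : ℝ => x ^ p) := by
      filter_upwards [Ioi_mem_nhds hy] with z hz
      rw [abs_of_pos hz]
    have h3 := h1.congr_of_eventuallyEq h2
    rw [sgnPow_of_pos _ hy]; exact h3

lemma key_ineq {p : ℝ} (hp : 1 < p) (x t : ℝ) :
    |x| ^ p - p * t * sgnPow (p - 1) x ≤ |x - t| ^ p := by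
  have hds : ∀ t : ℝ, HasDerivAt (fun t : ℝ => |x - t| ^ p + p * t * sgnPow (p - 1) x)
      (p * sgnPow (p - 1) (x - t) * (-1) + p * sgnPow (p - 1) x) t := by
    intro t
    have h1 : HasDerivAt (fun t : ℝ => x - t) (-1) t := (hasDerivAt_id t).const_sub x
    have h2 : HasDerivAt (fun t : ℝ => |x - t| ^ p) (p * sgnPow (p - 1) (x - t) * (-1)) t :=
      (hasDerivAt_abs_rpow hp (x - t)).comp t h1
    have h3 : HasDerivAt (fun t : ℝ => p * t * sgnPow (p - 1) x) (p * sgnPow (p - 1) x) t := by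
      simpa using ((hasDerivAt_id t).const_mul p).mul_const (sgnPow (p - 1) x)
    exact h2.add h3
  set G := fun t : ℝ => |x - t| ^ p + p * t * sgnPow (p - 1) x with hG
  have hg0 : G 0 = |x| ^ p := by simp [hG]
  have hderiv : ∀ t : ℝ, deriv G t = p * (sgnPow (p - 1) x - sgnPow (p - 1) (x - t)) := by
    intro t; rw [(hds t).deriv]; ring
  have hp1 : (0 : ℝ) < p - 1 := by linarith
  have hmono : MonotoneOn G (Ici (0 : ℝ)) := by
    apply monotoneOn_of_deriv_nonneg (convex_Ici 0)
    · exact fun t _ => (hds t).continuousAt.continuousWithinAt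
    · exact fun t _ => (hds t).differentiableAt.differentiableWithinAt
    · intro t ht
      rw [interior_Ici] at ht
      rw [hderiv t]
      have h4 : sgnPow (p - 1) (x - t) ≤ sgnPow (p - 1) x :=
        sgnPow_mono hp1 (by linarith [mem_Ioi.mp ht])
      nlinarith
  have hanti : AntitoneOn G (Iic (0 : ℝ)) := by
    apply antitoneOn_of_deriv_nonpos (convex_Iic 0)
    · exact fun t _ => (hds t).continuousAt.continuousWithinAt
    · exact fun t _ => (hds t).differentiableAt.differentiableWithinAt
    · intro t ht
      rw [interior_Iic] at ht
      rw [hderiv t]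
      have h4 : sgnPow (p - 1) x ≤ sgnPow (p - 1) (x - t) :=
        sgnPow_mono hp1 (by linarith [mem_Iio.mp ht])
      nlinarith
  have : G 0 ≤ G t := by
    rcases le_or_gt 0 t with ht | ht
    · exact hmono self_mem_Ici ht ht
    · exact hanti ht.le self_mem_Iic ht.le
  rw [hg0] at this
  simp only [hG] at this
  linarith

/-- The Gaussian-type weight. -/
noncomputable def wt (κ s : ℝ) : ℝ := Real.exp (-κ * s ^ 2 / 2)

lemma wt_pos (κ s : ℝ) : 0 < wt κ s := Real.exp_pos _

lemma continuous_wt (κ : ℝ) : Continuous (wt κ) := by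
  unfold wt; continuity

lemma wt_neg (κ s : ℝ) : wt κ (-s) = wt κ s := by simp [wt]

lemma contOn_abs_rpow_mul {f : ℝ → ℝ} {s : Set ℝ} (hf : ContinuousOn f s) {p : ℝ} (hp : 0 ≤ p)
    (κ : ℝ) : ContinuousOn (fun x => |f x| ^ p * wt κ x) s :=
  ((hf.abs).rpow_const (fun x _ => Or.inr hp)).mul (continuous_wt κ).continuousOn

lemma intInt_abs_rpow_mul {f : ℝ → ℝ} {a b : ℝ} (hf : ContinuousOn f (uIcc a b)) {p : ℝ}
    (hp : 0 ≤ p) (κ : ℝ) :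
    IntervalIntegrable (fun x => |f x| ^ p * wt κ x) volume a b :=
  (contOn_abs_rpow_mul hf hp κ).intervalIntegrable

lemma intInt_sgnPow_mul {f : ℝ → ℝ} {a b q : ℝ} (hf : ContinuousOn f (uIcc a b)) (hq : 0 < q)
    (κ : ℝ) : IntervalIntegrable (fun x => sgnPow q (f x) * wt κ x) volume a b :=
  (((continuous_sgnPow hq).comp_continuousOn hf).mul
    (continuous_wt κ).continuousOn).intervalIntegrable

lemma ae_ne (b : ℝ) : ∀ᵐ x : ℝ, x ≠ b := by
  rw [MeasureTheory.ae_iff]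
  have : {x : ℝ | ¬x ≠ b} = {b} := by ext x; simp
  rw [this]
  exact measure_singleton b

lemma intInt_deriv_rpow_mul (φ : ℝ → ℝ) {K : NNReal} {a b : ℝ} (hab : a ≤ b)
    (hK : LipschitzOnWith K φ (Icc a b)) {p : ℝ} (hp : 0 ≤ p) (κ : ℝ) :
    IntervalIntegrable (fun s => |deriv φ s| ^ p * wt κ s) volume a b := by
  rw [intervalIntegrable_iff_integrableOn_Ioc_of_le hab]
  set M := max |a| |b| with hM
  set C := (K : ℝ) ^ p * Real.exp (|κ| * M ^ 2 / 2) with hC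
  refine Integrable.mono' (g := fun _ => C)
    (integrableOn_const measure_Ioc_lt_top.ne) ?_ ?_
  · exact (((measurable_deriv φ).abs.pow_const p).mul
      ((continuous_wt κ).measurable)).aestronglyMeasurable
  · have hae1 : ∀ᵐ x ∂(volume.restrict (Ioc a b)), x ≠ b := ae_restrict_of_ae (ae_ne b)
    have hae2 : ∀ᵐ x ∂(volume.restrict (Ioc a b)), x ∈ Ioc a b :=
      ae_restrict_mem measurableSet_Ioc
    filter_upwards [hae1, hae2] with x hxb hx
    have hxo : x ∈ Ioo a b := ⟨hx.1, lt_of_le_of_ne hx.2 hxb⟩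
    have hd : |deriv φ x| ≤ (K : ℝ) := by
      have : Icc a b ∈ nhds x := Icc_mem_nhds hxo.1 hxo.2
      simpa using norm_deriv_le_of_lipschitzOn this hK
    have h1 : |deriv φ x| ^ p ≤ (K : ℝ) ^ p :=
      Real.rpow_le_rpow (abs_nonneg _) hd hp
    have h2 : wt κ x ≤ Real.exp (|κ| * M ^ 2 / 2) := by
      rw [wt, Real.exp_le_exp]
      have hx2 : x ^ 2 ≤ M ^ 2 := by
        have h3 : x ≤ M := le_trans hx.2 (le_trans (le_abs_self b) (le_max_right _ _))
        have h4 : -M ≤ x := by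
          have h5 : -|a| ≤ x := le_trans (neg_abs_le a) hxo.1.le
          exact le_trans (neg_le_neg (le_max_left |a| |b|)) h5
        nlinarith
      nlinarith [abs_nonneg κ, neg_abs_le κ, sq_nonneg x, le_abs_self κ, neg_le_abs κ]
    rw [Real.norm_eq_abs,
      abs_of_nonneg (mul_nonneg (Real.rpow_nonneg (abs_nonneg _) _) (wt_pos κ x).le)]
    exact mul_le_mul h1 h2 (le_of_lt (wt_pos κ x)) (by positivity)

lemma integral_pos_of_pos_at {f : ℝ → ℝ} {a b : ℝ} (hab : a < b)
    (hf : ContinuousOn f (Icc a b)) (hnonneg : ∀ x, 0 ≤ f x)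
    (hfi : IntervalIntegrable f volume a b)
    {x₀ : ℝ} (hx₀ : x₀ ∈ Icc a b) (hpos : 0 < f x₀) :
    0 < ∫ x in a..b, f x := by
  rw [integral_pos_iff_support_of_nonneg_ae (Eventually.of_forall hnonneg) hfi]
  refine ⟨hab, ?_⟩
  have hc : ContinuousWithinAt f (Icc a b) x₀ := hf x₀ hx₀
  have hev : ∀ᶠ y in nhdsWithin x₀ (Icc a b), f y ∈ Ioi (f x₀ / 2) :=
    hc (Ioi_mem_nhds (by linarith))
  obtain ⟨δ, hδ, hball⟩ := Metric.mem_nhdsWithin_iff.mp hev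
  set u := max a (x₀ - δ / 2) with hu
  set v := min b (x₀ + δ / 2) with hv
  have hx1 : a ≤ x₀ := hx₀.1
  have hx2 : x₀ ≤ b := hx₀.2
  have huv : u < v := max_lt (lt_min hab (by linarith)) (lt_min (by linarith) (by linarith))
  have hsub : Ioo u v ⊆ Function.support f ∩ Ioc a b := by
    intro z hz
    have hza : a < z := lt_of_le_of_lt (le_max_left _ _) hz.1
    have hzb : z ≤ b := le_of_lt (lt_of_lt_of_le hz.2 (min_le_left _ _))
    have hz1 : x₀ - δ / 2 < z := lt_of_le_of_lt (le_max_right _ _) hz.1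
    have hz2 : z < x₀ + δ / 2 := lt_of_lt_of_le hz.2 (min_le_right _ _)
    have hzball : z ∈ Metric.ball x₀ δ := by
      rw [Metric.mem_ball, Real.dist_eq, abs_sub_lt_iff]
      constructor <;> linarith
    have : f z ∈ Ioi (f x₀ / 2) := hball ⟨hzball, ⟨hza.le, hzb⟩⟩
    have hfz : 0 < f z := lt_trans (by linarith) this
    exact ⟨fun h => hfz.ne' h, ⟨hza, hzb⟩⟩
  calc (0 : ENNReal) < volume (Ioo u v) := by
        rw [Real.volume_Ioo]; simp [huv, ENNReal.ofReal_pos, sub_pos]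
    _ ≤ volume (Function.support f ∩ Ioc a b) := measure_mono hsub


lemma abs_rpow_wt_nonneg (κ p : ℝ) (y x : ℝ) : 0 ≤ |y| ^ p * wt κ x :=
  mul_nonneg (Real.rpow_nonneg (abs_nonneg _) _) (wt_pos κ x).le

/-- positivity of the weighted `p`-norm for a continuous function nonvanishing somewhere. -/
lemma den_pos {g : ℝ → ℝ} {a b : ℝ} (hab : a < b) (hg : ContinuousOn g (Icc a b))
    {p : ℝ} (hp : 0 < p) (κ : ℝ) {x₀ : ℝ} (hx₀ : x₀ ∈ Icc a b) (hne : g x₀ ≠ 0) :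
    0 < ∫ s in a..b, |g s| ^ p * wt κ s := by
  refine integral_pos_of_pos_at hab (contOn_abs_rpow_mul hg hp.le κ)
    (fun x => abs_rpow_wt_nonneg κ p (g x) x) ?_ hx₀ ?_
  · exact intInt_abs_rpow_mul (by rwa [uIcc_of_le hab.le]) hp.le κ
  · exact mul_pos (Real.rpow_pos_of_pos (abs_pos.mpr hne) p) (wt_pos κ x₀)

lemma DN_nonneg {p κ L : ℝ} (hL : 0 < L) {r : ℝ}
    (hr : r ∈ { r : ℝ | ∃ φ : ℝ → ℝ,
      (∃ K : NNReal, LipschitzOnWith K φ (Set.Icc (0 : ℝ) L)) ∧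
      φ 0 = 0 ∧
      ¬ (∀ s ∈ Set.Icc (0 : ℝ) L, φ s = 0) ∧
      r = (∫ s in (0 : ℝ)..L, |deriv φ s| ^ p * Real.exp (-κ * s ^ 2 / 2)) /
          (∫ s in (0 : ℝ)..L, |φ s| ^ p * Real.exp (-κ * s ^ 2 / 2)) }) : 0 ≤ r := by
  obtain ⟨φ, -, -, -, hreq⟩ := hr
  rw [hreq]
  refine div_nonneg ?_ ?_ <;>
    exact integral_nonneg hL.le fun u _ => abs_rpow_wt_nonneg κ p _ u

lemma DN_bddBelow (p κ L : ℝ) (hL : 0 < L) : BddBelow { r : ℝ | ∃ φ : ℝ → ℝ,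
      (∃ K : NNReal, LipschitzOnWith K φ (Set.Icc (0 : ℝ) L)) ∧
      φ 0 = 0 ∧
      ¬ (∀ s ∈ Set.Icc (0 : ℝ) L, φ s = 0) ∧
      r = (∫ s in (0 : ℝ)..L, |deriv φ s| ^ p * Real.exp (-κ * s ^ 2 / 2)) /
          (∫ s in (0 : ℝ)..L, |φ s| ^ p * Real.exp (-κ * s ^ 2 / 2)) } :=
  ⟨0, fun _ hr => DN_nonneg hL hr⟩

/-- Key lemma: Dirichlet(0)-Neumann(L) lower bound for the Rayleigh quotient. -/
lemma DN_key {p κ L : ℝ} (hp : 1 < p) (hL : 0 < L) (g : ℝ → ℝ) (K : NNReal)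
    (hg : LipschitzOnWith K g (Icc (0 : ℝ) L)) (h0 : g 0 = 0) :
    rayleighDirichletNeumann p κ L * (∫ s in (0:ℝ)..L, |g s| ^ p * wt κ s)
      ≤ ∫ s in (0:ℝ)..L, |deriv g s| ^ p * wt κ s := by
  have hp0 : (0:ℝ) < p := by linarith
  by_cases hz : ∀ s ∈ Icc (0:ℝ) L, g s = 0
  · have hD : (∫ s in (0:ℝ)..L, |g s| ^ p * wt κ s) = 0 := by
      have hcg : EqOn (fun s => |g s| ^ p * wt κ s) (fun _ => (0:ℝ)) (uIcc (0:ℝ) L) := by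
        intro s hs
        rw [uIcc_of_le hL.le] at hs
        simp [hz s hs, Real.zero_rpow hp0.ne']
      rw [intervalIntegral.integral_congr hcg, intervalIntegral.integral_zero]
    rw [hD, mul_zero]
    exact integral_nonneg hL.le fun u _ => abs_rpow_wt_nonneg κ p _ u
  · have hDpos : 0 < ∫ s in (0:ℝ)..L, |g s| ^ p * wt κ s := by
      push_neg at hz
      obtain ⟨x₀, hx₀, hne⟩ := hz
      exact den_pos hL hg.continuousOn hp0 κ hx₀ hne
    have hmem : (∫ s in (0:ℝ)..L, |deriv g s| ^ p * wt κ s) /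
        (∫ s in (0:ℝ)..L, |g s| ^ p * wt κ s) ∈ { r : ℝ | ∃ φ : ℝ → ℝ,
      (∃ K : NNReal, LipschitzOnWith K φ (Set.Icc (0 : ℝ) L)) ∧
      φ 0 = 0 ∧
      ¬ (∀ s ∈ Set.Icc (0 : ℝ) L, φ s = 0) ∧
      r = (∫ s in (0 : ℝ)..L, |deriv φ s| ^ p * Real.exp (-κ * s ^ 2 / 2)) /
          (∫ s in (0 : ℝ)..L, |φ s| ^ p * Real.exp (-κ * s ^ 2 / 2)) } :=
      ⟨g, ⟨K, hg⟩, h0, hz, rfl⟩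
    have hle : rayleighDirichletNeumann p κ L ≤ (∫ s in (0:ℝ)..L, |deriv g s| ^ p * wt κ s) /
        (∫ s in (0:ℝ)..L, |g s| ^ p * wt κ s) :=
      csInf_le (DN_bddBelow p κ L hL) hmem
    calc rayleighDirichletNeumann p κ L * (∫ s in (0:ℝ)..L, |g s| ^ p * wt κ s)
        ≤ ((∫ s in (0:ℝ)..L, |deriv g s| ^ p * wt κ s) /
            (∫ s in (0:ℝ)..L, |g s| ^ p * wt κ s)) * (∫ s in (0:ℝ)..L, |g s| ^ p * wt κ s) :=
          mul_le_mul_of_nonneg_right hle hDpos.le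
      _ = ∫ s in (0:ℝ)..L, |deriv g s| ^ p * wt κ s := div_mul_cancel₀ _ hDpos.ne'

lemma reflect_lip {g : ℝ → ℝ} {K : NNReal} {L : ℝ} (hg : LipschitzOnWith K g (Icc (-L) 0)) :
    LipschitzOnWith K (fun x => g (-x)) (Icc (0:ℝ) L) := by
  rw [lipschitzOnWith_iff_dist_le_mul] at hg ⊢
  intro x hx y hy
  have hx' : -x ∈ Icc (-L) 0 := by constructor <;> [linarith [hx.2]; linarith [hx.1]]
  have hy' : -y ∈ Icc (-L) 0 := by constructor <;> [linarith [hy.2]; linarith [hy.1]]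
  simpa [dist_neg_neg] using hg (-x) hx' (-y) hy'

lemma integral_reflect (F : ℝ → ℝ) (L : ℝ) :
    ∫ s in (-L)..(0:ℝ), F s = ∫ s in (0:ℝ)..L, F (-s) := by
  rw [intervalIntegral.integral_comp_neg (a := (0:ℝ)) (b := L) (f := F)]
  norm_num

lemma abs_deriv_reflect (g : ℝ → ℝ) (x : ℝ) :
    |deriv (fun y => g (-y)) x| = |deriv g (-x)| := by
  rw [deriv_comp_neg, abs_neg]

/-- The reflected key lemma on `[-L, 0]` with Dirichlet condition at `0`. -/
lemma DN_key_left {p κ L : ℝ} (hp : 1 < p) (hL : 0 < L) (g : ℝ → ℝ) (K : NNReal)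
    (hg : LipschitzOnWith K g (Icc (-L) (0:ℝ))) (h0 : g 0 = 0) :
    rayleighDirichletNeumann p κ L * (∫ s in (-L)..(0:ℝ), |g s| ^ p * wt κ s)
      ≤ ∫ s in (-L)..(0:ℝ), |deriv g s| ^ p * wt κ s := by
  have e1 : ∫ s in (-L)..(0:ℝ), |g s| ^ p * wt κ s
      = ∫ s in (0:ℝ)..L, |g (-s)| ^ p * wt κ s := by
    rw [integral_reflect (fun s => |g s| ^ p * wt κ s) L]
    exact intervalIntegral.integral_congr fun s _ => by rw [wt_neg]
  have e2 : ∫ s in (-L)..(0:ℝ), |deriv g s| ^ p * wt κ s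
      = ∫ s in (0:ℝ)..L, |deriv (fun y => g (-y)) s| ^ p * wt κ s := by
    rw [integral_reflect (fun s => |deriv g s| ^ p * wt κ s) L]
    exact intervalIntegral.integral_congr fun s _ => by rw [wt_neg, abs_deriv_reflect]
  rw [e1, e2]
  exact DN_key hp hL (fun x => g (-x)) K (reflect_lip hg) (by simpa using h0)

lemma lip_sub_const {f : ℝ → ℝ} {K : NNReal} {s : Set ℝ} (hf : LipschitzOnWith K f s) (c : ℝ) :
    LipschitzOnWith K (fun x => f x - c) s := by
  rw [lipschitzOnWith_iff_dist_le_mul] at hf ⊢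
  intro x hx y hy
  simpa [Real.dist_eq, sub_sub_sub_cancel_right] using hf x hx y hy

lemma neumann_ge {p κ L : ℝ} (hp : 1 < p) (hL : 0 < L) (φ : ℝ → ℝ) (K : NNReal)
    (hK : LipschitzOnWith K φ (Icc (-L) L))
    (hnz : ¬ (∀ s ∈ Icc (-L) L, φ s = 0))
    (hconstr : (∫ s in (-L)..L, sgnPow (p - 1) (φ s) * wt κ s) = 0) :
    rayleighDirichletNeumann p κ L ≤
      (∫ s in (-L)..L, |deriv φ s| ^ p * wt κ s) / (∫ s in (-L)..L, |φ s| ^ p * wt κ s) := by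
  have hp0 : (0:ℝ) < p := lt_trans one_pos hp
  have hLL : -L ≤ L := by linarith
  have hφc : ContinuousOn φ (Icc (-L) L) := hK.continuousOn
  push_neg at hnz
  obtain ⟨x₀, hx₀, hne⟩ := hnz
  set t := φ 0 with ht
  set g : ℝ → ℝ := fun s => φ s - t with hg
  have hglip : LipschitzOnWith K g (Icc (-L) L) := lip_sub_const hK t
  have hgc : ContinuousOn g (Icc (-L) L) := hglip.continuousOn
  have hDφpos : 0 < ∫ s in (-L)..L, |φ s| ^ p * wt κ s :=
    den_pos (by linarith) hφc hp0 κ hx₀ hne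
  -- the shift inequality
  have hint1 : IntervalIntegrable (fun s => |φ s| ^ p * wt κ s) volume (-L) L :=
    intInt_abs_rpow_mul (by rwa [uIcc_of_le hLL]) hp0.le κ
  have hint2 : IntervalIntegrable (fun s => sgnPow (p-1) (φ s) * wt κ s) volume (-L) L :=
    intInt_sgnPow_mul (by rwa [uIcc_of_le hLL]) (by linarith) κ
  have hint4 : IntervalIntegrable (fun s => |g s| ^ p * wt κ s) volume (-L) L :=
    intInt_abs_rpow_mul (by rw [uIcc_of_le hLL]; exact hgc) hp0.le κ
  have hshift : (∫ s in (-L)..L, |φ s| ^ p * wt κ s) ≤ ∫ s in (-L)..L, |g s| ^ p * wt κ s := by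
    have hint3 : IntervalIntegrable
        (fun s => |φ s| ^ p * wt κ s - (p * t) * (sgnPow (p-1) (φ s) * wt κ s)) volume (-L) L :=
      hint1.sub (hint2.const_mul _)
    have hmono := intervalIntegral.integral_mono_on hLL hint3 hint4 (fun x _ => by
      have hkey := mul_le_mul_of_nonneg_right (key_ineq hp (φ x) t) (wt_pos κ x).le
      calc |φ x| ^ p * wt κ x - (p * t) * (sgnPow (p-1) (φ x) * wt κ x)
          = (|φ x| ^ p - p * t * sgnPow (p-1) (φ x)) * wt κ x := by ring
        _ ≤ |φ x - t| ^ p * wt κ x := hkey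
        _ = |g x| ^ p * wt κ x := rfl)
    rwa [intervalIntegral.integral_sub hint1 (hint2.const_mul _),
      intervalIntegral.integral_const_mul, hconstr, mul_zero, sub_zero] at hmono
  have hDgpos : 0 < ∫ s in (-L)..L, |g s| ^ p * wt κ s := lt_of_lt_of_le hDφpos hshift
  -- numerator: deriv g = deriv φ
  have hre : (fun s => |deriv g s| ^ p * wt κ s) = fun s => |deriv φ s| ^ p * wt κ s :=
    funext fun s => by rw [hg]; rw [deriv_sub_const]
  -- splittings
  have hNl : IntervalIntegrable (fun s => |deriv φ s| ^ p * wt κ s) volume (-L) 0 :=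
    intInt_deriv_rpow_mul φ (by linarith) (hK.mono (Icc_subset_Icc le_rfl hL.le)) hp0.le κ
  have hNr : IntervalIntegrable (fun s => |deriv φ s| ^ p * wt κ s) volume 0 L :=
    intInt_deriv_rpow_mul φ hL.le (hK.mono (Icc_subset_Icc (by linarith) le_rfl)) hp0.le κ
  have hNsplit := intervalIntegral.integral_add_adjacent_intervals hNl hNr
  have hDl : IntervalIntegrable (fun s => |g s| ^ p * wt κ s) volume (-L) 0 :=
    intInt_abs_rpow_mul (by
      rw [uIcc_of_le (by linarith : -L ≤ (0:ℝ))]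
      exact hgc.mono (Icc_subset_Icc le_rfl hL.le)) hp0.le κ
  have hDr : IntervalIntegrable (fun s => |g s| ^ p * wt κ s) volume 0 L :=
    intInt_abs_rpow_mul (by
      rw [uIcc_of_le hL.le]
      exact hgc.mono (Icc_subset_Icc (by linarith) le_rfl)) hp0.le κ
  have hDsplit := intervalIntegral.integral_add_adjacent_intervals hDl hDr
  -- apply the one-sided estimates to g
  have hg0 : g 0 = 0 := by simp [hg, ht]
  have hright := DN_key (κ := κ) hp hL g K (hglip.mono (Icc_subset_Icc (by linarith) le_rfl)) hg0
  have hleft := DN_key_left (κ := κ) hp hL g K (hglip.mono (Icc_subset_Icc le_rfl hL.le)) hg0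
  rw [hre] at hright hleft
  set lam := rayleighDirichletNeumann p κ L with hlam
  have hsum : lam * (∫ s in (-L)..L, |g s| ^ p * wt κ s)
      ≤ ∫ s in (-L)..L, |deriv φ s| ^ p * wt κ s := by
    rw [← hDsplit, ← hNsplit, mul_add]
    exact add_le_add hleft hright
  have hNnonneg : 0 ≤ ∫ s in (-L)..L, |deriv φ s| ^ p * wt κ s :=
    integral_nonneg hLL fun u _ => abs_rpow_wt_nonneg κ p _ u
  have h1 : lam ≤ (∫ s in (-L)..L, |deriv φ s| ^ p * wt κ s) /
      (∫ s in (-L)..L, |g s| ^ p * wt κ s) := (le_div_iff₀ hDgpos).mpr hsum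
  have h2 : (∫ s in (-L)..L, |deriv φ s| ^ p * wt κ s) /
        (∫ s in (-L)..L, |g s| ^ p * wt κ s)
      ≤ (∫ s in (-L)..L, |deriv φ s| ^ p * wt κ s) /
        (∫ s in (-L)..L, |φ s| ^ p * wt κ s) := by
    gcongr
  linarith

/-- Odd extension: all the data needed to view a DN test function as a Neumann test function. -/
lemma odd_ext {p κ L : ℝ} (hp : 1 < p) (hL : 0 < L) (ψ : ℝ → ℝ) (K : NNReal)
    (hK : LipschitzOnWith K ψ (Icc (0:ℝ) L)) (h0 : ψ 0 = 0)
    (hnz : ¬ (∀ s ∈ Icc (0:ℝ) L, ψ s = 0)) :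
    ∃ φ : ℝ → ℝ,
      (∃ K' : NNReal, LipschitzOnWith K' φ (Icc (-L) L)) ∧
      (¬ (∀ s ∈ Icc (-L) L, φ s = 0)) ∧
      (∫ s in (-L)..L, sgnPow (p - 1) (φ s) * wt κ s) = 0 ∧
      (∫ s in (0:ℝ)..L, |deriv ψ s| ^ p * wt κ s) / (∫ s in (0:ℝ)..L, |ψ s| ^ p * wt κ s)
        = (∫ s in (-L)..L, |deriv φ s| ^ p * wt κ s) / (∫ s in (-L)..L, |φ s| ^ p * wt κ s) := by
  classical
  have hp0 : (0:ℝ) < p := lt_trans one_pos hp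
  have hLL : -L ≤ L := by linarith
  set φ : ℝ → ℝ := fun x => if 0 ≤ x then ψ x else -ψ (-x) with hφdef
  have hpos : ∀ x : ℝ, 0 ≤ x → φ x = ψ x := fun x hx => if_pos hx
  have hneg : ∀ x : ℝ, x ≤ 0 → φ x = -ψ (-x) := by
    intro x hx
    rcases eq_or_lt_of_le hx with h | h
    · rw [h, hpos 0 le_rfl, h0]
      simp [h0]
    · exact if_neg (not_le.mpr h)
  -- Lipschitz
  have hKdist := lipschitzOnWith_iff_dist_le_mul.mp hK
  have hlip : LipschitzOnWith K φ (Icc (-L) L) := by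
    rw [lipschitzOnWith_iff_dist_le_mul]
    have key : ∀ a b : ℝ, a ∈ Icc (-L) L → b ∈ Icc (-L) L → b ≤ 0 → 0 ≤ a →
        dist (φ a) (φ b) ≤ K * dist a b := by
      intro a b ha hb hb0 ha0
      rw [hpos a ha0, hneg b hb0]
      have h1 := hKdist a ⟨ha0, ha.2⟩ 0 ⟨le_rfl, hL.le⟩
      have h2 := hKdist (-b) ⟨neg_nonneg.mpr hb0, by linarith [hb.1]⟩ 0 ⟨le_rfl, hL.le⟩
      rw [h0, Real.dist_eq, Real.dist_eq, sub_zero, sub_zero, abs_of_nonneg ha0] at h1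
      rw [h0, Real.dist_eq, Real.dist_eq, sub_zero, sub_zero,
        abs_of_nonneg (neg_nonneg.mpr hb0)] at h2
      rw [Real.dist_eq, Real.dist_eq, sub_neg_eq_add, abs_of_nonneg (by linarith : 0 ≤ a - b)]
      calc |ψ a + ψ (-b)| ≤ |ψ a| + |ψ (-b)| := abs_add_le _ _
        _ ≤ K * a + K * (-b) := add_le_add h1 h2
        _ = K * (a - b) := by ring
    intro x hx y hy
    rcases le_total 0 x with hx0 | hx0 <;> rcases le_total 0 y with hy0 | hy0
    · rw [hpos x hx0, hpos y hy0]
      exact hKdist x ⟨hx0, hx.2⟩ y ⟨hy0, hy.2⟩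
    · exact key x y hx hy hy0 hx0
    · rw [dist_comm, dist_comm x y]; exact key y x hy hx hx0 hy0
    · rw [hneg x hx0, hneg y hy0]
      have := hKdist (-x) ⟨neg_nonneg.mpr hx0, by linarith [hx.1]⟩
        (-y) ⟨neg_nonneg.mpr hy0, by linarith [hy.1]⟩
      simpa [Real.dist_eq, neg_sub_neg, abs_sub_comm] using this
  have hφc : ContinuousOn φ (Icc (-L) L) := hlip.continuousOn
  -- not identically zero
  push_neg at hnz
  obtain ⟨x₀, hx₀, hnex₀⟩ := hnz
  have hφnz : ¬ (∀ s ∈ Icc (-L) L, φ s = 0) := by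
    push_neg
    exact ⟨x₀, ⟨by linarith [hx₀.1], hx₀.2⟩, by rw [hpos x₀ hx₀.1]; exact hnex₀⟩
  -- pointwise identities on the two halves
  refine ⟨φ, ⟨K, hlip⟩, hφnz, ?_, ?_⟩
  · -- the orthogonality constraint
    have hcl : IntervalIntegrable (fun s => sgnPow (p-1) (φ s) * wt κ s) volume (-L) 0 :=
      intInt_sgnPow_mul (by
        rw [uIcc_of_le (by linarith : -L ≤ (0:ℝ))]
        exact hφc.mono (Icc_subset_Icc le_rfl hL.le)) (by linarith) κ
    have hcr : IntervalIntegrable (fun s => sgnPow (p-1) (φ s) * wt κ s) volume 0 L :=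
      intInt_sgnPow_mul (by
        rw [uIcc_of_le hL.le]
        exact hφc.mono (Icc_subset_Icc (by linarith) le_rfl)) (by linarith) κ
    rw [← intervalIntegral.integral_add_adjacent_intervals hcl hcr]
    have e_r : (∫ s in (0:ℝ)..L, sgnPow (p-1) (φ s) * wt κ s)
        = ∫ s in (0:ℝ)..L, sgnPow (p-1) (ψ s) * wt κ s := by
      apply intervalIntegral.integral_congr
      intro s hs
      rw [uIcc_of_le hL.le] at hs
      dsimp only
      rw [hpos s hs.1]
    have e_l : (∫ s in (-L)..(0:ℝ), sgnPow (p-1) (φ s) * wt κ s)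
        = - ∫ s in (0:ℝ)..L, sgnPow (p-1) (ψ s) * wt κ s := by
      rw [integral_reflect (fun s => sgnPow (p-1) (φ s) * wt κ s) L,
        ← intervalIntegral.integral_neg]
      apply intervalIntegral.integral_congr
      intro s hs
      rw [uIcc_of_le hL.le] at hs
      dsimp only
      rw [hneg (-s) (by linarith [hs.1]), neg_neg, sgnPow_neg, wt_neg]
      ring
    rw [e_r, e_l]
    ring
  · -- the Rayleigh quotient is unchanged
    have hDr : (∫ s in (0:ℝ)..L, |φ s| ^ p * wt κ s)
        = ∫ s in (0:ℝ)..L, |ψ s| ^ p * wt κ s := by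
      apply intervalIntegral.integral_congr
      intro s hs
      rw [uIcc_of_le hL.le] at hs
      dsimp only
      rw [hpos s hs.1]
    have hDl : (∫ s in (-L)..(0:ℝ), |φ s| ^ p * wt κ s)
        = ∫ s in (0:ℝ)..L, |ψ s| ^ p * wt κ s := by
      rw [integral_reflect (fun s => |φ s| ^ p * wt κ s) L]
      apply intervalIntegral.integral_congr
      intro s hs
      rw [uIcc_of_le hL.le] at hs
      dsimp only
      rw [hneg (-s) (by linarith [hs.1]), neg_neg, wt_neg, abs_neg]
    have hNr : (∫ s in (0:ℝ)..L, |deriv φ s| ^ p * wt κ s)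
        = ∫ s in (0:ℝ)..L, |deriv ψ s| ^ p * wt κ s := by
      apply intervalIntegral.integral_congr_ae
      filter_upwards [ae_ne L] with s hsL hs
      rw [uIoc_of_le hL.le] at hs
      have hs' : s ∈ Ioo (0:ℝ) L := ⟨hs.1, lt_of_le_of_ne hs.2 hsL⟩
      have : φ =ᶠ[nhds s] ψ := by
        filter_upwards [Ioi_mem_nhds hs'.1] with y hy
        exact hpos y (le_of_lt hy)
      rw [this.deriv_eq]
    have hNl : (∫ s in (-L)..(0:ℝ), |deriv φ s| ^ p * wt κ s)
        = ∫ s in (0:ℝ)..L, |deriv ψ s| ^ p * wt κ s := by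
      rw [integral_reflect (fun s => |deriv φ s| ^ p * wt κ s) L]
      apply intervalIntegral.integral_congr_ae
      filter_upwards [ae_ne L] with s hsL hs
      rw [uIoc_of_le hL.le] at hs
      have hs' : s ∈ Ioo (0:ℝ) L := ⟨hs.1, lt_of_le_of_ne hs.2 hsL⟩
      have heq : φ =ᶠ[nhds (-s)] (fun x => -ψ (-x)) := by
        filter_upwards [Iio_mem_nhds (by linarith [hs'.1] : -s < 0)] with y hy
        exact hneg y (le_of_lt hy)
      have hd : deriv φ (-s) = deriv ψ s := by
        rw [heq.deriv_eq, deriv.fun_neg, deriv_comp_neg, neg_neg, neg_neg]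
      rw [wt_neg, hd]
    have hNil : IntervalIntegrable (fun s => |deriv φ s| ^ p * wt κ s) volume (-L) 0 :=
      intInt_deriv_rpow_mul φ (by linarith) (hlip.mono (Icc_subset_Icc le_rfl hL.le)) hp0.le κ
    have hNir : IntervalIntegrable (fun s => |deriv φ s| ^ p * wt κ s) volume 0 L :=
      intInt_deriv_rpow_mul φ hL.le (hlip.mono (Icc_subset_Icc (by linarith) le_rfl)) hp0.le κ
    have hDil : IntervalIntegrable (fun s => |φ s| ^ p * wt κ s) volume (-L) 0 :=
      intInt_abs_rpow_mul (by
        rw [uIcc_of_le (by linarith : -L ≤ (0:ℝ))]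
        exact hφc.mono (Icc_subset_Icc le_rfl hL.le)) hp0.le κ
    have hDir : IntervalIntegrable (fun s => |φ s| ^ p * wt κ s) volume 0 L :=
      intInt_abs_rpow_mul (by
        rw [uIcc_of_le hL.le]
        exact hφc.mono (Icc_subset_Icc (by linarith) le_rfl)) hp0.le κ
    rw [← intervalIntegral.integral_add_adjacent_intervals hNil hNir,
      ← intervalIntegral.integral_add_adjacent_intervals hDil hDir,
      hNr, hNl, hDr, hDl]
    rw [← two_mul, ← two_mul, mul_div_mul_left _ _ (two_ne_zero)]

/-- The admissible set for the Neumann problem on `[-L, L]`. -/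
def NSet (p κ L : ℝ) : Set ℝ :=
  { r : ℝ | ∃ φ : ℝ → ℝ,
    (∃ K : NNReal, LipschitzOnWith K φ (Set.Icc (-L) L)) ∧
    ¬ (∀ s ∈ Set.Icc (-L) L, φ s = 0) ∧
    (∫ s in (-L)..L, sgnPow (p - 1) (φ s) * wt κ s) = 0 ∧
    r = (∫ s in (-L)..L, |deriv φ s| ^ p * wt κ s) /
        (∫ s in (-L)..L, |φ s| ^ p * wt κ s) }

/-- The admissible set for the Dirichlet/Neumann problem on `[0, L]`. -/
def DSet (p κ L : ℝ) : Set ℝ :=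
  { r : ℝ | ∃ φ : ℝ → ℝ,
    (∃ K : NNReal, LipschitzOnWith K φ (Set.Icc (0 : ℝ) L)) ∧
    φ 0 = 0 ∧
    ¬ (∀ s ∈ Set.Icc (0 : ℝ) L, φ s = 0) ∧
    r = (∫ s in (0 : ℝ)..L, |deriv φ s| ^ p * wt κ s) /
        (∫ s in (0 : ℝ)..L, |φ s| ^ p * wt κ s) }

lemma rayleighNeumann_eq_sInf (p κ D : ℝ) : rayleighNeumann p κ D = sInf (NSet p κ (D / 2)) := rfl

lemma rayleighDN_eq_sInf (p κ L : ℝ) :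
    rayleighDirichletNeumann p κ L = sInf (DSet p κ L) := rfl

lemma neumann_nonneg {p κ L : ℝ} (hL : 0 < L) {r : ℝ} (hr : r ∈ NSet p κ L) : 0 ≤ r := by
  obtain ⟨φ, -, -, -, hreq⟩ := hr
  rw [hreq]
  refine div_nonneg ?_ ?_ <;>
    exact integral_nonneg (by linarith) fun u _ => abs_rpow_wt_nonneg κ p _ u

lemma DSet_nonempty (p κ L : ℝ) (hL : 0 < L) : (DSet p κ L).Nonempty := by
  refine ⟨_, fun s : ℝ => s, ⟨1, fun x _ y _ => by simp⟩, rfl, ?_, rfl⟩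
  push_neg
  exact ⟨L, ⟨hL.le, le_rfl⟩, hL.ne'⟩

lemma NSet_nonempty (p κ L : ℝ) (hp : 1 < p) (hL : 0 < L) : (NSet p κ L).Nonempty := by
  obtain ⟨r, ψ, ⟨K, hK⟩, h0, hnz, -⟩ := DSet_nonempty p κ L hL
  obtain ⟨φ, hlip, hφnz, hconstr, -⟩ := odd_ext (κ := κ) hp hL ψ K hK h0 hnz
  exact ⟨_, φ, hlip, hφnz, hconstr, rfl⟩


end NeumannAux

open NeumannAux Set in
/-- **The Neumann eigenvalue on `[-D/2, D/2]` equals the Dirichlet/Neumann eigenvalue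
on `[0, D/2]`:** for `1 < p < ∞`, `κ ∈ ℝ`, `D > 0`, one has
`μ_p(κ, D) = λ_{p, κ, D/2}`. -/
theorem rayleighNeumann_eq_rayleighDirichletNeumann (p κ D : ℝ)
    (hp : 1 < p) (hD : 0 < D) :
    rayleighNeumann p κ D = rayleighDirichletNeumann p κ (D / 2) := by
  have hL : 0 < D / 2 := by linarith
  rw [rayleighNeumann_eq_sInf, rayleighDN_eq_sInf]
  apply le_antisymm
  · refine le_csInf (DSet_nonempty p κ (D / 2) hL) ?_
    intro r hr
    obtain ⟨ψ, ⟨K, hK⟩, h0, hnz, hreq⟩ := hr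
    obtain ⟨φ, hlip, hφnz, hconstr, heq⟩ := odd_ext (κ := κ) hp hL ψ K hK h0 hnz
    refine csInf_le ⟨0, fun r' hr' => neumann_nonneg hL hr'⟩ ?_
    exact ⟨φ, hlip, hφnz, hconstr, by rw [hreq]; exact heq⟩
  · refine le_csInf (NSet_nonempty p κ (D / 2) hp hL) ?_
    intro r hr
    obtain ⟨φ, ⟨K, hK⟩, hnz, hconstr, hreq⟩ := hr
    rw [hreq, ← rayleighDN_eq_sInf]
    exact neumann_ge hp hL φ K hK hnz hconstr
end

section
/- Fix 1 < p < ∞ and λ > 0, and let I ⊆ ℝ be an interval. Suppose w : I → ℝ is C¹, the map t ↦ |w′(t)|^{p-2} w′(t) is differentiable on I, and (|w′(t)|^{p-2} w′(t))′ = -λ |w(t)|^{p-2} w(t) for all t ∈ I. Then the function t ↦ (p-1)|w′(t)|^p + λ |w(t)|^p is constant on I. -/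
lemma sgnPow_zero (q : ℝ) : sgnPow q 0 = 0 := by simp [sgnPow]

lemma abs_sgnPow (q x : ℝ) (hq : 0 < q) : |sgnPow q x| = |x| ^ q := by
  rcases lt_trichotomy x 0 with h|h|h
  · rw [sgnPow, Real.sign_of_neg h, abs_mul]
    simp [abs_of_nonneg (Real.rpow_nonneg (abs_nonneg x) q)]
  · simp [h, sgnPow, Real.rpow_eq_zero_iff_of_nonneg, hq.ne']
  · rw [sgnPow, Real.sign_of_pos h, abs_mul]
    simp [abs_of_nonneg (Real.rpow_nonneg (abs_nonneg x) q)]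

lemma sign_sgnPow (q x : ℝ) : Real.sign (sgnPow q x) = Real.sign x := by
  rcases lt_trichotomy x 0 with h|h|h
  · have : sgnPow q x < 0 := by
      rw [sgnPow, Real.sign_of_neg h]
      have : (0:ℝ) < |x| ^ q := Real.rpow_pos_of_pos (abs_pos.2 h.ne) q
      nlinarith
    rw [Real.sign_of_neg this, Real.sign_of_neg h]
  · simp [h, sgnPow]
  · have : 0 < sgnPow q x := by
      rw [sgnPow, Real.sign_of_pos h]
      have : (0:ℝ) < |x| ^ q := Real.rpow_pos_of_pos (abs_pos.2 h.ne') q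
      nlinarith
    rw [Real.sign_of_pos this, Real.sign_of_pos h]

lemma sgnPow_sgnPow (q x : ℝ) (hq : 0 < q) : sgnPow q⁻¹ (sgnPow q x) = x := by
  rcases eq_or_ne x 0 with h|h
  · simp [h, sgnPow_zero]
  · rw [sgnPow, sign_sgnPow, abs_sgnPow q x hq, ← Real.rpow_mul (abs_nonneg x),
      mul_inv_cancel₀ hq.ne', Real.rpow_one]
    rcases lt_or_gt_of_ne h with h|h
    · rw [Real.sign_of_neg h, abs_of_neg h]; ring
    · rw [Real.sign_of_pos h, abs_of_pos h]; ring

lemma hasDerivAt_abs_rpow' {p : ℝ} (hp : 1 < p) (x : ℝ) :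
    HasDerivAt (fun y => |y| ^ p) (p * sgnPow (p - 1) x) x := by
  rcases lt_trichotomy x 0 with hx|hx|hx
  · have h1 : HasDerivAt (fun z : ℝ => z ^ p) (p * (-x) ^ (p - 1)) (-x) :=
      Real.hasDerivAt_rpow_const (Or.inl (by simp; linarith))
    have h2 : HasDerivAt (fun y : ℝ => (-y) ^ p) (p * (-x) ^ (p - 1) * (-1)) x :=
      h1.comp x (hasDerivAt_neg x)
    have heq : (fun y : ℝ => |y| ^ p) =ᶠ[nhds x] fun y => (-y) ^ p := by
      filter_upwards [eventually_lt_nhds hx] with y hy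
      rw [abs_of_neg hy]
    have := h2.congr_of_eventuallyEq heq
    refine this.congr_deriv ?_
    rw [sgnPow, Real.sign_of_neg hx, abs_of_neg hx]; ring
  · subst hx
    have hval : p * sgnPow (p - 1) 0 = 0 := by simp [sgnPow_zero]
    rw [hval]
    rw [hasDerivAt_iff_tendsto_slope]
    apply squeeze_zero_norm' (a := fun y : ℝ => |y| ^ (p - 1))
    · filter_upwards [self_mem_nhdsWithin] with y (hy : y ≠ 0)
      have : slope (fun y : ℝ => |y| ^ p) 0 y = |y| ^ p / y := by
        simp [slope, abs_of_nonneg, Real.zero_rpow (by linarith : p ≠ 0)]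
        ring
      rw [this]
      rw [Real.norm_eq_abs, abs_div, abs_of_nonneg (Real.rpow_nonneg (abs_nonneg y) p),
        Real.rpow_sub (abs_pos.2 hy), Real.rpow_one]
    · have hc : ContinuousAt (fun y : ℝ => |y| ^ (p - 1)) 0 := by
        apply ContinuousAt.rpow_const (continuous_abs.continuousAt)
        right; linarith
      have := hc.tendsto
      simp only [abs_zero, Real.zero_rpow (by linarith : p - 1 ≠ 0)] at this
      exact this.mono_left nhdsWithin_le_nhds
  · have h1 : HasDerivAt (fun z : ℝ => z ^ p) (p * x ^ (p - 1)) x :=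
      Real.hasDerivAt_rpow_const (Or.inl hx.ne')
    have heq : (fun y : ℝ => |y| ^ p) =ᶠ[nhds x] fun y => y ^ p := by
      filter_upwards [eventually_gt_nhds hx] with y hy
      rw [abs_of_pos hy]
    have := h1.congr_of_eventuallyEq heq
    refine this.congr_deriv ?_
    rw [sgnPow, Real.sign_of_pos hx, abs_of_pos hx]; ring

/-- **First integral for the unweighted (`κ = 0`) model equation.**
Fix `1 < p < ∞`, `λ > 0`, and an interval `I ⊆ ℝ`.  If `w` is `C¹` on `I` with
derivative `g` and `t ↦ |g|^{p-2} g` is differentiable on `I` with derivative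
`-λ |w|^{p-2} w`, then `t ↦ (p-1) |g t|^p + λ |w t|^p` is constant on `I`. -/
theorem model_first_integral (p lam : ℝ) (hp : 1 < p) (hlam : 0 < lam)
    (I : Set ℝ) (hI : I.OrdConnected)
    (w g : ℝ → ℝ)
    (hw : ∀ t ∈ I, HasDerivAt w (g t) t)
    (hg : ContinuousOn g I)
    (hODE : ∀ t ∈ I, HasDerivAt (fun s => sgnPow (p - 1) (g s))
      (-lam * sgnPow (p - 1) (w t)) t) :
    ∀ s ∈ I, ∀ t ∈ I,
      (p - 1) * |g s| ^ p + lam * |w s| ^ p = (p - 1) * |g t| ^ p + lam * |w t| ^ p := by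
  have hp1 : (0:ℝ) < p - 1 := by linarith
  set q : ℝ := p / (p - 1) with hqdef
  have hq : 1 < q := by rw [hqdef, lt_div_iff₀ hp1]; linarith
  have hpq : (p - 1) * q = p := by rw [hqdef]; field_simp
  have hq1 : q - 1 = (p - 1)⁻¹ := by
    rw [hqdef, div_sub_one hp1.ne', show p - (p - 1) = 1 by ring, one_div]
  set E : ℝ → ℝ := fun t => (p - 1) * |g t| ^ p + lam * |w t| ^ p with hE
  -- rewrite the |g| term via the composed function
  have hgq : ∀ s, |g s| ^ p = |sgnPow (p - 1) (g s)| ^ q := by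
    intro s
    rw [abs_sgnPow _ _ hp1, ← Real.rpow_mul (abs_nonneg _), hpq]
  have hderiv : ∀ t ∈ I, HasDerivAt E 0 t := by
    intro t ht
    have h2 : HasDerivAt (fun s => |w s| ^ p) (p * sgnPow (p - 1) (w t) * g t) t :=
      (hasDerivAt_abs_rpow' hp (w t)).comp t (hw t ht)
    have h3 : HasDerivAt (fun s => |sgnPow (p - 1) (g s)| ^ q)
        (q * sgnPow (q - 1) (sgnPow (p - 1) (g t)) * (-lam * sgnPow (p - 1) (w t))) t :=
      HasDerivAt.comp (h₂ := fun y => |y| ^ q) t (hasDerivAt_abs_rpow' hq (sgnPow (p - 1) (g t))) (hODE t ht)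
    have hsg : sgnPow (q - 1) (sgnPow (p - 1) (g t)) = g t := by
      rw [hq1, sgnPow_sgnPow _ _ hp1]
    rw [hsg] at h3
    have h1 : HasDerivAt (fun s => |g s| ^ p)
        (q * g t * (-lam * sgnPow (p - 1) (w t))) t := by
      have := h3.congr_of_eventuallyEq (Filter.Eventually.of_forall fun s => (hgq s))
      exact this
    have := (h1.const_mul (p - 1)).add (h2.const_mul lam)
    have hzero : (p - 1) * (q * g t * (-lam * sgnPow (p - 1) (w t)))
        + lam * (p * sgnPow (p - 1) (w t) * g t) = 0 := by
      rw [show (p - 1) * (q * g t * (-lam * sgnPow (p - 1) (w t)))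
          = ((p-1)*q) * (g t * (-lam * sgnPow (p - 1) (w t))) by ring, hpq]
      ring
    rw [hzero] at this
    exact this
  -- continuity of E on I
  have hwc : ContinuousOn w I := fun t ht => (hw t ht).continuousAt.continuousWithinAt
  have habsp : Continuous fun x : ℝ => |x| ^ p := by
    have : Differentiable ℝ fun x : ℝ => |x| ^ p := fun x => (hasDerivAt_abs_rpow' hp x).differentiableAt
    exact this.continuous
  have hEc : ContinuousOn E I := by
    apply ContinuousOn.add
    · exact continuousOn_const.mul (habsp.comp_continuousOn hg)
    · exact continuousOn_const.mul (habsp.comp_continuousOn hwc)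
  -- constancy
  have key : ∀ a ∈ I, ∀ b ∈ I, a ≤ b → E b = E a := by
    intro a ha b hb hab
    have hsub : Set.Icc a b ⊆ I := hI.out ha hb
    exact constant_of_has_deriv_right_zero (hEc.mono hsub)
      (fun x hx => ((hderiv x (hsub ⟨hx.1, hx.2.le⟩)).hasDerivWithinAt)) b
      ⟨hab, le_refl b⟩
  intro s hs t ht
  rcases le_total s t with h|h
  · exact (key s hs t ht h).symm
  · exact key t ht s hs h
end
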